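/- Fix a load i and suppose all other loads are truthful. Let load i report a distribution θ̂_i in the day-ahead market and submit real-time reports (δ̂_i(l))_{l≥1} that are i.i.d. with distribution θ̂_i and independent of the process ((z(l), δ(l)))_{l≥1}. Let (ĝ, π̂) minimize the expected social cost computed under the reported distribution θ̂ := θ̂_i × θ_{−i}, with minimum value W*(θ̂), and let (g*, π*) minimize it under the true distribution θ := θ_i × θ_{−i}, with minimum value W*(θ). Let W*₋ᵢ ∈ ℝ be arbitrary (the social-cost optimum with load i absent), let the penalties satisfy J_p(l) ≥ 0, and define load i's per-day utility u(l) := p¹ + p²(l) − c_i( d(δ_i(l)) − d(δ̂_i(l)) + π̂_i(z(l), (δ̂_i(l), δ_{−i}(l))), δ_i(l) ), where p¹ := W*₋ᵢ − W*(θ̂) + Ê[ c_i(π̂_i(z, δ̂), δ̂_i) ], p²(l) := c_i( π̂_i(z(l), (δ̂_i(l), δ_{−i}(l))), δ̂_i(l) ) − Ê[ c_i(π̂_i(z, δ̂), δ̂_i) ] − J_p(l)·1_{E_i(l)}, Ê denotes expectation under θ_z × θ̂_i × θ_{−i}, and E_i(l) is any sequence of penalty events. Then almost surely limsup_{L→∞}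 (1/L)·∑_{l=1}^{L} u(l) ≤ W*₋ᵢ − W*(θ), the long-run average utility obtained under the truthful strategy. (This instantiates part 1 of the paper's Theorem for the class of strategies that misreport the day-ahead distribution but submit i.i.d. real-time reports consistent with it: such strategies cannot outperform truth-telling.) -/

import Mathlib

open MeasureTheory ProbabilityTheory Filter
open scoped Classical

/-- The type profile in `Δⁿ` whose `i`-th slot is `e` and whose other slots are given by `η`. -/
def DRprofile {Δ : Type*} {n : ℕ} (i : Fin n) (e : Δ) (η : {j : Fin n // j ≠ i} → Δ) :
    Fin n → Δ :=
  fun j => if h : j = i then e else η ⟨j, h⟩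


lemma aux_limsup_le {Ω : Type*} [MeasurableSpace Ω] (μ : Measure Ω) [IsProbabilityMeasure μ]
    {T : Type*} [Fintype T] [Nonempty T] [MeasurableSpace T] [MeasurableSingletonClass T]
    (X : ℕ → Ω → T) (hmeas : ∀ l, Measurable (X l))
    (hindep : iIndepFun X μ)
    (hident : ∀ l, 1 ≤ l → μ.map (X l) = μ.map (X 1))
    (F : T → ℝ) (u : ℕ → Ω → ℝ) (hu : ∀ l ω, u l ω ≤ F (X l ω)) (b : ℝ)
    (hb : ∫ x, F x ∂(μ.map (X 1)) ≤ b) :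
    ∀ᵐ ω ∂μ, Filter.limsup
        (fun L : ℕ => (((1 / (L : ℝ)) * ∑ l ∈ Finset.Icc 1 L, u l ω : ℝ) : EReal)) atTop
      ≤ (b : EReal) := by
  have hF : Measurable F := measurable_of_countable F
  set Y : ℕ → Ω → ℝ := fun k ω => F (X (k + 1) ω) with hY
  have hYmeas : ∀ k, Measurable (Y k) := fun k => hF.comp (hmeas _)
  set C : ℝ := Finset.univ.sup' Finset.univ_nonempty fun x : T => |F x| with hCdef
  have hC : ∀ x : T, |F x| ≤ C := fun x => by
    rw [hCdef]; exact Finset.le_sup' (fun x : T => |F x|) (Finset.mem_univ x)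
  have hint : Integrable (Y 0) μ := by
    refine (integrable_const C).mono' (hYmeas 0).aestronglyMeasurable ?_
    filter_upwards with ω
    simpa [Real.norm_eq_abs] using hC (X 1 ω)
  have hYindep : Pairwise (Function.onFun (IndepFun · · μ) Y) := fun k m hkm =>
    (hindep.indepFun (show k + 1 ≠ m + 1 by omega)).comp hF hF
  have hYident : ∀ k, IdentDistrib (Y k) (Y 0) μ μ := fun k =>
    (IdentDistrib.mk (hmeas (k + 1)).aemeasurable (hmeas 1).aemeasurable
      (hident (k + 1) (by omega))).comp hF
  have hEY : (∫ ω, Y 0 ω ∂μ) = ∫ x, F x ∂(μ.map (X 1)) := by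
    rw [integral_map (hmeas 1).aemeasurable hF.aestronglyMeasurable]
  have hsl := strong_law_ae_real Y hint hYindep hYident
  filter_upwards [hsl] with ω hω
  have hsum : ∀ L : ℕ, ∑ l ∈ Finset.Icc 1 L, F (X l ω) = ∑ k ∈ Finset.range L, Y k ω := by
    intro L
    induction L with
    | zero => simp
    | succ L ih => rw [Finset.sum_Icc_succ_top (by omega), ih, Finset.sum_range_succ]
  have hle : ∀ L : ℕ, ((1 / (L : ℝ)) * ∑ l ∈ Finset.Icc 1 L, u l ω)
      ≤ (∑ k ∈ Finset.range L, Y k ω) / L := by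
    intro L
    calc (1 / (L : ℝ)) * ∑ l ∈ Finset.Icc 1 L, u l ω
        ≤ (1 / (L : ℝ)) * ∑ l ∈ Finset.Icc 1 L, F (X l ω) :=
          mul_le_mul_of_nonneg_left (Finset.sum_le_sum fun l _ => hu l ω) (by positivity)
      _ = (∑ k ∈ Finset.range L, Y k ω) / L := by rw [← hsum L]; ring
  calc Filter.limsup
        (fun L : ℕ => (((1 / (L : ℝ)) * ∑ l ∈ Finset.Icc 1 L, u l ω : ℝ) : EReal)) atTop
      ≤ Filter.limsup
        (fun L : ℕ => (((∑ k ∈ Finset.range L, Y k ω) / L : ℝ) : EReal)) atTop := by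
        exact limsup_le_limsup (Eventually.of_forall fun L => EReal.coe_le_coe_iff.mpr (hle L))
    _ = ((∫ ω, Y 0 ω ∂μ : ℝ) : EReal) := Tendsto.limsup_eq (EReal.tendsto_coe.mpr hω)
    _ ≤ (b : EReal) := EReal.coe_le_coe_iff.mpr (by rw [hEY]; exact hb)


/-- part 1 of the paper's Theorem instantiated for the class of strategies that
misreport the day-ahead distribution and submit i.i.d. real-time reports consistent with it:
All loads other than `i` are truthful; load `i` reports day-ahead distribution `θhi` and submits
real-time reports `δhat l` that are i.i.d. `∼ θhi`, independent of the process
`((z(l), δ(l)))_l` which is i.i.d. `∼ θ_z × θi × θmi`. With `(ĝ, π̂)` minimizing the expected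
social cost `W(·,·; θhi)` under the reported distribution (minimum `Wθhat`), `(g*, π*)`
minimizing `W(·,·; θi)` under the true distribution (minimum `Wθ`), an arbitrary constant
`Wmi` (the optimum with load `i` absent), nonnegative penalties `J_p`, arbitrary penalty events
`E_i(l)`, and per-day utility
`u(l) = p¹ + p²(l) − c_i(d(δ_i(l)) − d(δhat(l)) + π̂_i(z(l), (δhat(l), δ_{−i}(l))), δ_i(l))`
where `p¹ = Wmi − Wθhat + Ê[c_i(π̂_i(z,δ̂), δ̂_i)]` and
`p²(l) = c_i(π̂_i(z(l), (δhat(l), δ_{−i}(l))), δhat(l)) − Ê[c_i(π̂_i(z,δ̂), δ̂_i)]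
  − J_p(l)·1_{E_i(l)}`,
almost surely `limsup_{L→∞} (1/L) ∑_{l=1}^L u(l) ≤ Wmi − Wθ` (the truthful long-run average
utility); the `limsup` is stated in `EReal`. -/
theorem stmt_14
    {Ω : Type*} [MeasurableSpace Ω] (μ : Measure Ω) [IsProbabilityMeasure μ]
    {Z : Type*} [Fintype Z] [Nonempty Z] [MeasurableSpace Z] [MeasurableSingletonClass Z]
    {Δ : Type*} [Fintype Δ] [Nonempty Δ] [MeasurableSpace Δ] [MeasurableSingletonClass Δ]
    (n : ℕ) (i : Fin n)
    (θz : Z → ℝ) (hθz0 : ∀ a, 0 ≤ θz a) (hθz1 : ∑ a : Z, θz a = 1)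
    (θi θhi : Δ → ℝ)
    (hθi0 : ∀ e, 0 ≤ θi e) (hθi1 : ∑ e : Δ, θi e = 1)
    (hθhi0 : ∀ e, 0 ≤ θhi e) (hθhi1 : ∑ e : Δ, θhi e = 1)
    (θmi : ({j : Fin n // j ≠ i} → Δ) → ℝ)
    (hθmi0 : ∀ η, 0 ≤ θmi η) (hθmi1 : ∑ η : {j : Fin n // j ≠ i} → Δ, θmi η = 1)
    (zval : Z → ℝ) (d : Δ → ℝ) (cg cr : ℝ → ℝ) (c : Fin n → ℝ → Δ → ℝ)
    (z : ℕ → Ω → Z) (δi : ℕ → Ω → Δ) (δmi : ℕ → Ω → ({j : Fin n // j ≠ i} → Δ))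
    (δhat : ℕ → Ω → Δ)
    (hmeas : ∀ l, Measurable (fun ω => (z l ω, δi l ω, δmi l ω, δhat l ω)))
    (hdist : ∀ l, 1 ≤ l → ∀ (a : Z) (e : Δ) (η : {j : Fin n // j ≠ i} → Δ) (ehat : Δ),
      μ {ω | z l ω = a ∧ δi l ω = e ∧ δmi l ω = η ∧ δhat l ω = ehat}
        = ENNReal.ofReal (θz a * (θi e * (θmi η * θhi ehat))))
    (hindep : iIndepFun
      (fun l ω => (z l ω, δi l ω, δmi l ω, δhat l ω)) μ)
    (W : ℝ → (Z → (Fin n → Δ) → Fin n → ℝ) → (Δ → ℝ) → ℝ)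
    (hW : ∀ g π w, W g π w =
      ∑ a : Z, ∑ e : Δ, ∑ η : {j : Fin n // j ≠ i} → Δ,
        (θz a * (w e * θmi η)) *
          (cg g
            + cr (zval a - g +
                ∑ j, (d (DRprofile i e η j) - π a (DRprofile i e η) j))
            + ∑ j, c j (π a (DRprofile i e η) j) (DRprofile i e η j)))
    (ghat : ℝ) (πhat : Z → (Fin n → Δ) → Fin n → ℝ)
    (hhatopt : ∀ g π, W ghat πhat θhi ≤ W g π θhi)
    (Wθhat : ℝ) (hWθhat : Wθhat = W ghat πhat θhi)
    (gstar : ℝ) (πstar : Z → (Fin n → Δ) → Fin n → ℝ)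
    (hstaropt : ∀ g π, W gstar πstar θi ≤ W g π θi)
    (Wθ : ℝ) (hWθ : Wθ = W gstar πstar θi)
    (Wmi : ℝ)
    (Jp : ℕ → ℝ) (hJ0 : ∀ l, 0 ≤ Jp l)
    (Ei : ℕ → Set Ω)
    (Eci : ℝ)
    (hEci : Eci = ∑ a : Z, ∑ ehat : Δ, ∑ η : {j : Fin n // j ≠ i} → Δ,
      (θz a * (θhi ehat * θmi η)) * c i (πhat a (DRprofile i ehat η) i) ehat)
    (u : ℕ → Ω → ℝ)
    (hu : ∀ l ω, u l ω =
      (Wmi - Wθhat + Eci)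
      + (c i (πhat (z l ω) (DRprofile i (δhat l ω) (δmi l ω)) i) (δhat l ω)
          - Eci - Set.indicator (Ei l) (fun _ => Jp l) ω)
      - c i (d (δi l ω) - d (δhat l ω)
            + πhat (z l ω) (DRprofile i (δhat l ω) (δmi l ω)) i)
          (δi l ω)) :
    ∀ᵐ ω ∂μ, Filter.limsup
        (fun L : ℕ => (((1 / (L : ℝ)) * ∑ l ∈ Finset.Icc 1 L, u l ω : ℝ) : EReal))
        atTop
      ≤ ((Wmi - Wθ : ℝ) : EReal) := by
  classical
  set X : ℕ → Ω → Z × Δ × ({j : Fin n // j ≠ i} → Δ) × Δ :=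
    fun l ω => (z l ω, δi l ω, δmi l ω, δhat l ω) with hX
  set F : Z × Δ × ({j : Fin n // j ≠ i} → Δ) × Δ → ℝ := fun x =>
    (Wmi - Wθhat + Eci) + (c i (πhat x.1 (DRprofile i x.2.2.2 x.2.2.1) i) x.2.2.2 - Eci)
      - c i (d x.2.1 - d x.2.2.2 + πhat x.1 (DRprofile i x.2.2.2 x.2.2.1) i) x.2.1 with hF
  refine aux_limsup_le μ X hmeas hindep ?_ F u ?_ (Wmi - Wθ) ?_
  · -- identical distribution
    intro l hl
    refine Measure.ext_of_singleton fun x => ?_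
    obtain ⟨a, e, η, eh⟩ := x
    have hpre : ∀ m, (X m) ⁻¹' {(a, e, η, eh)}
        = {ω | z m ω = a ∧ δi m ω = e ∧ δmi m ω = η ∧ δhat m ω = eh} := by
      intro m; ext ω; simp [hX, Prod.ext_iff]
    rw [Measure.map_apply (hmeas l) (measurableSet_singleton _),
      Measure.map_apply (hmeas 1) (measurableSet_singleton _), hpre, hpre,
      hdist l hl a e η eh, hdist 1 le_rfl a e η eh]
  · -- domination of the utility
    intro l ω
    have h0 : 0 ≤ Set.indicator (Ei l) (fun _ => Jp l) ω :=
      Set.indicator_nonneg (fun _ _ => hJ0 l) ω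
    rw [hu l ω]
    simp only [hF, hX]
    linarith
  · -- the expectation bound
    -- the modified policy implementing the misreport under the true types
    set πmod : Δ → Z → (Fin n → Δ) → Fin n → ℝ := fun eh a dp j =>
      if j = i then d (dp i) - d eh + πhat a (DRprofile i eh (fun k => dp k.1)) i
      else πhat a (DRprofile i eh (fun k => dp k.1)) j with hπmod
    set w : Z → Δ → ({j : Fin n // j ≠ i} → Δ) → ℝ :=
      fun a eh η => θz a * (θhi eh * θmi η) with hwdef
    set cihat : Z → Δ → ({j : Fin n // j ≠ i} → Δ) → ℝ :=
      fun a eh η => c i (πhat a (DRprofile i eh η) i) eh with hcihat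
    set ciact : Z → Δ → ({j : Fin n // j ≠ i} → Δ) → Δ → ℝ :=
      fun a eh η e => c i (d e - d eh + πhat a (DRprofile i eh η) i) e with hciactdef
    set K : Z → Δ → ({j : Fin n // j ≠ i} → Δ) → ℝ := fun a eh η =>
      cg ghat
        + cr (zval a - ghat + ∑ j, (d (DRprofile i eh η j) - πhat a (DRprofile i eh η) j))
        + ∑ j, c j (πhat a (DRprofile i eh η) j) (DRprofile i eh η j) with hK
    -- elementary summation helpers
    have hη : ∀ x : ℝ, (∑ η : {j : Fin n // j ≠ i} → Δ, x * θmi η) = x := fun x => by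
      rw [← Finset.mul_sum, hθmi1, mul_one]
    have hehS : ∀ x : ℝ, (∑ eh : Δ, x * θhi eh) = x := fun x => by
      rw [← Finset.mul_sum, hθhi1, mul_one]
    have heS : ∀ x : ℝ, (∑ e : Δ, θi e * x) = x := fun x => by
      rw [← Finset.sum_mul, hθi1, one_mul]
    -- the main rearrangement lemma
    have hmain : ∀ q : Z → Δ → ({j : Fin n // j ≠ i} → Δ) → Δ → ℝ,
        (∑ a : Z, ∑ e : Δ, ∑ η : {j : Fin n // j ≠ i} → Δ, ∑ eh : Δ,
            (θz a * (θi e * (θmi η * θhi eh))) * q a e η eh)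
        = ∑ a : Z, ∑ eh : Δ, ∑ η : {j : Fin n // j ≠ i} → Δ,
            w a eh η * (∑ e : Δ, θi e * q a e η eh) := by
      intro q
      refine Finset.sum_congr rfl fun a _ => ?_
      calc (∑ e : Δ, ∑ η : {j : Fin n // j ≠ i} → Δ, ∑ eh : Δ,
              (θz a * (θi e * (θmi η * θhi eh))) * q a e η eh)
          = ∑ η : {j : Fin n // j ≠ i} → Δ, ∑ e : Δ, ∑ eh : Δ,
              (θz a * (θi e * (θmi η * θhi eh))) * q a e η eh := Finset.sum_comm
        _ = ∑ η : {j : Fin n // j ≠ i} → Δ, ∑ eh : Δ, ∑ e : Δ,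
              (θz a * (θi e * (θmi η * θhi eh))) * q a e η eh :=
            Finset.sum_congr rfl fun η _ => Finset.sum_comm
        _ = ∑ eh : Δ, ∑ η : {j : Fin n // j ≠ i} → Δ, ∑ e : Δ,
              (θz a * (θi e * (θmi η * θhi eh))) * q a e η eh := Finset.sum_comm
        _ = ∑ eh : Δ, ∑ η : {j : Fin n // j ≠ i} → Δ,
              w a eh η * (∑ e : Δ, θi e * q a e η eh) := by
            refine Finset.sum_congr rfl fun eh _ => Finset.sum_congr rfl fun η _ => ?_
            rw [Finset.mul_sum]
            exact Finset.sum_congr rfl fun e _ => by simp only [hwdef]; ring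
    -- total mass one
    have hw1 : (∑ a : Z, ∑ eh : Δ, ∑ η : {j : Fin n // j ≠ i} → Δ, w a eh η) = 1 := by
      have h1 : ∀ (a : Z) (eh : Δ),
          (∑ η : {j : Fin n // j ≠ i} → Δ, w a eh η) = θz a * θhi eh := by
        intro a eh
        rw [← hη (θz a * θhi eh)]
        exact Finset.sum_congr rfl fun η _ => by simp only [hwdef]; ring
      simp only [h1]
      have h2 : ∀ a : Z, (∑ eh : Δ, θz a * θhi eh) = θz a := fun a => hehS (θz a)
      simp only [h2]
      exact hθz1
    -- expansion of Wθhat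
    have hWhat' : Wθhat = ∑ a : Z, ∑ eh : Δ, ∑ η : {j : Fin n // j ≠ i} → Δ,
        w a eh η * K a eh η := by
      rw [hWθhat, hW]
    -- expansion of Eci
    have hEci' : Eci = ∑ a : Z, ∑ eh : Δ, ∑ η : {j : Fin n // j ≠ i} → Δ,
        w a eh η * cihat a eh η := by
      rw [hEci]
    -- value of the modified policy
    have hWmod : ∀ eh : Δ, W ghat (πmod eh) θi
        = ∑ a : Z, ∑ e : Δ, ∑ η : {j : Fin n // j ≠ i} → Δ,
            (θz a * (θi e * θmi η)) * (K a eh η - cihat a eh η + ciact a eh η e) := by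
      intro eh
      rw [hW]
      refine Finset.sum_congr rfl fun a _ => Finset.sum_congr rfl fun e _ =>
        Finset.sum_congr rfl fun η _ => ?_
      have hres : (fun k : {j : Fin n // j ≠ i} => DRprofile i e η k.1) = η :=
        funext fun k => by simp [DRprofile, k.2]
      have hDRi : ∀ e' : Δ, DRprofile i e' η i = e' := fun e' => by simp [DRprofile]
      have hπ : ∀ j : Fin n, πmod eh a (DRprofile i e η) j
          = if j = i then d e - d eh + πhat a (DRprofile i eh η) i
            else πhat a (DRprofile i eh η) j := by
        intro j
        simp only [hπmod, hres, hDRi]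
      have hA : (∑ j, (d (DRprofile i e η j) - πmod eh a (DRprofile i e η) j))
          = ∑ j, (d (DRprofile i eh η j) - πhat a (DRprofile i eh η) j) := by
        refine Finset.sum_congr rfl fun j _ => ?_
        rcases eq_or_ne j i with hj | hj
        · subst hj
          rw [hπ j, if_pos rfl, hDRi e, hDRi eh]
          ring
        · rw [hπ j, if_neg hj]
          simp [DRprofile, hj]
      have hB : (∑ j, c j (πmod eh a (DRprofile i e η) j) (DRprofile i e η j))
          = (∑ j, c j (πhat a (DRprofile i eh η) j) (DRprofile i eh η j))
            - cihat a eh η + ciact a eh η e := by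
        rw [← Finset.add_sum_erase _
            (fun j => c j (πmod eh a (DRprofile i e η) j) (DRprofile i e η j))
            (Finset.mem_univ i),
          ← Finset.add_sum_erase _
            (fun j => c j (πhat a (DRprofile i eh η) j) (DRprofile i eh η j))
            (Finset.mem_univ i)]
        have herase : (∑ j ∈ Finset.univ.erase i,
              c j (πmod eh a (DRprofile i e η) j) (DRprofile i e η j))
            = ∑ j ∈ Finset.univ.erase i,
              c j (πhat a (DRprofile i eh η) j) (DRprofile i eh η j) := by
          refine Finset.sum_congr rfl fun j hj => ?_
          have hj' : j ≠ i := Finset.ne_of_mem_erase hj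
          rw [hπ j, if_neg hj']
          simp [DRprofile, hj']
        rw [herase, hπ i, if_pos rfl, hDRi e, hDRi eh]
        simp only [hcihat, hciactdef]
        ring
      rw [hA, hB]
      simp only [hK]
      ring
    -- convexity bound
    have hconv : Wθ ≤ ∑ eh : Δ, θhi eh * W ghat (πmod eh) θi := by
      calc Wθ = ∑ eh : Δ, θhi eh * Wθ := by rw [← Finset.sum_mul, hθhi1, one_mul]
        _ ≤ ∑ eh : Δ, θhi eh * W ghat (πmod eh) θi :=
          Finset.sum_le_sum fun eh _ =>
            mul_le_mul_of_nonneg_left (hWθ ▸ hstaropt ghat (πmod eh)) (hθhi0 eh)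
    -- the mixture identity
    have hmix : (∑ eh : Δ, θhi eh * W ghat (πmod eh) θi)
        = Wθhat - Eci
          + ∑ a : Z, ∑ eh : Δ, ∑ η : {j : Fin n // j ≠ i} → Δ,
              w a eh η * (∑ e : Δ, θi e * ciact a eh η e) := by
      have h1 : ∀ eh : Δ, θhi eh * W ghat (πmod eh) θi
          = ∑ a : Z, ∑ e : Δ, ∑ η : {j : Fin n // j ≠ i} → Δ,
              (θz a * (θi e * (θmi η * θhi eh)))
                * (K a eh η - cihat a eh η + ciact a eh η e) := by
        intro eh
        rw [hWmod eh, Finset.mul_sum]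
        refine Finset.sum_congr rfl fun a _ => ?_
        rw [Finset.mul_sum]
        refine Finset.sum_congr rfl fun e _ => ?_
        rw [Finset.mul_sum]
        exact Finset.sum_congr rfl fun η _ => by ring
      simp only [h1]
      have hcomm : (∑ eh : Δ, ∑ a : Z, ∑ e : Δ, ∑ η : {j : Fin n // j ≠ i} → Δ,
            (θz a * (θi e * (θmi η * θhi eh)))
              * (K a eh η - cihat a eh η + ciact a eh η e))
          = ∑ a : Z, ∑ e : Δ, ∑ η : {j : Fin n // j ≠ i} → Δ, ∑ eh : Δ,
            (θz a * (θi e * (θmi η * θhi eh)))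
              * (K a eh η - cihat a eh η + ciact a eh η e) := by
        calc (∑ eh : Δ, ∑ a : Z, ∑ e : Δ, ∑ η : {j : Fin n // j ≠ i} → Δ,
              (θz a * (θi e * (θmi η * θhi eh)))
                * (K a eh η - cihat a eh η + ciact a eh η e))
            = ∑ a : Z, ∑ eh : Δ, ∑ e : Δ, ∑ η : {j : Fin n // j ≠ i} → Δ,
              (θz a * (θi e * (θmi η * θhi eh)))
                * (K a eh η - cihat a eh η + ciact a eh η e) := Finset.sum_comm
          _ = ∑ a : Z, ∑ e : Δ, ∑ eh : Δ, ∑ η : {j : Fin n // j ≠ i} → Δ,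
              (θz a * (θi e * (θmi η * θhi eh)))
                * (K a eh η - cihat a eh η + ciact a eh η e) :=
              Finset.sum_congr rfl fun a _ => Finset.sum_comm
          _ = ∑ a : Z, ∑ e : Δ, ∑ η : {j : Fin n // j ≠ i} → Δ, ∑ eh : Δ,
              (θz a * (θi e * (θmi η * θhi eh)))
                * (K a eh η - cihat a eh η + ciact a eh η e) :=
              Finset.sum_congr rfl fun a _ => Finset.sum_congr rfl fun e _ =>
                Finset.sum_comm
      rw [hcomm, hmain (fun a e η eh => K a eh η - cihat a eh η + ciact a eh η e)]
      have h2 : ∀ (a : Z) (eh : Δ) (η : {j : Fin n // j ≠ i} → Δ),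
          w a eh η * (∑ e : Δ, θi e * (K a eh η - cihat a eh η + ciact a eh η e))
            = w a eh η * K a eh η - w a eh η * cihat a eh η
              + w a eh η * (∑ e : Δ, θi e * ciact a eh η e) := by
        intro a eh η
        have h3 : (∑ e : Δ, θi e * (K a eh η - cihat a eh η + ciact a eh η e))
            = (K a eh η - cihat a eh η) + ∑ e : Δ, θi e * ciact a eh η e := by
          calc (∑ e : Δ, θi e * (K a eh η - cihat a eh η + ciact a eh η e))
              = ∑ e : Δ, (θi e * (K a eh η - cihat a eh η) + θi e * ciact a eh η e) :=
                Finset.sum_congr rfl fun e _ => by ring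
            _ = (∑ e : Δ, θi e * (K a eh η - cihat a eh η)) + ∑ e : Δ, θi e * ciact a eh η e :=
                Finset.sum_add_distrib
            _ = (K a eh η - cihat a eh η) + ∑ e : Δ, θi e * ciact a eh η e := by
                rw [heS]
        rw [h3]
        ring
      simp only [h2]
      simp only [Finset.sum_add_distrib, Finset.sum_sub_distrib]
      rw [← hWhat', ← hEci']
    -- compute the integral
    have hw0 : ∀ (a : Z) (e : Δ) (η : {j : Fin n // j ≠ i} → Δ) (eh : Δ),
        0 ≤ θz a * (θi e * (θmi η * θhi eh)) := fun a e η eh =>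
      mul_nonneg (hθz0 _) (mul_nonneg (hθi0 _) (mul_nonneg (hθmi0 _) (hθhi0 _)))
    have hPM : IsProbabilityMeasure (μ.map (X 1)) :=
      Measure.isProbabilityMeasure_map (hmeas 1).aemeasurable
    have hint : Integrable F (μ.map (X 1)) := .of_finite
    have hatom : ∀ x : Z × Δ × ({j : Fin n // j ≠ i} → Δ) × Δ,
        (μ.map (X 1)) {x}
          = ENNReal.ofReal (θz x.1 * (θi x.2.1 * (θmi x.2.2.1 * θhi x.2.2.2))) := by
      rintro ⟨a, e, η, eh⟩
      rw [Measure.map_apply (hmeas 1) (measurableSet_singleton _)]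
      have hpre : (X 1) ⁻¹' {(a, e, η, eh)}
          = {ω | z 1 ω = a ∧ δi 1 ω = e ∧ δmi 1 ω = η ∧ δhat 1 ω = eh} := by
        ext ω; simp [hX, Prod.ext_iff]
      rw [hpre, hdist 1 le_rfl a e η eh]
    have hInt : (∫ x, F x ∂(μ.map (X 1)))
        = ∑ a : Z, ∑ e : Δ, ∑ η : {j : Fin n // j ≠ i} → Δ, ∑ eh : Δ,
          (θz a * (θi e * (θmi η * θhi eh))) * F (a, e, η, eh) := by
      rw [integral_fintype hint]
      simp only [Fintype.sum_prod_type]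
      refine Finset.sum_congr rfl fun a _ => Finset.sum_congr rfl fun e _ =>
        Finset.sum_congr rfl fun η _ => Finset.sum_congr rfl fun eh _ => ?_
      rw [Measure.real, hatom (a, e, η, eh), ENNReal.toReal_ofReal (hw0 a e η eh), smul_eq_mul]
    have hFval : ∀ (a : Z) (e : Δ) (η : {j : Fin n // j ≠ i} → Δ) (eh : Δ),
        F (a, e, η, eh) = (Wmi - Wθhat) + cihat a eh η - ciact a eh η e := by
      intro a e η eh
      simp only [hF, hcihat, hciactdef]
      ring
    have hML : (∫ x, F x ∂(μ.map (X 1)))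
        = Wmi - Wθhat + Eci
          - ∑ a : Z, ∑ eh : Δ, ∑ η : {j : Fin n // j ≠ i} → Δ,
              w a eh η * (∑ e : Δ, θi e * ciact a eh η e) := by
      rw [hInt]
      simp only [hFval]
      have hsplit : ∀ (a : Z) (e : Δ) (η : {j : Fin n // j ≠ i} → Δ) (eh : Δ),
          (θz a * (θi e * (θmi η * θhi eh)))
              * ((Wmi - Wθhat) + cihat a eh η - ciact a eh η e)
            = (θz a * (θi e * (θmi η * θhi eh))) * (Wmi - Wθhat)
              + (θz a * (θi e * (θmi η * θhi eh))) * cihat a eh η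
              - (θz a * (θi e * (θmi η * θhi eh))) * ciact a eh η e := by
        intro a e η eh; ring
      simp only [hsplit]
      simp only [Finset.sum_add_distrib, Finset.sum_sub_distrib]
      rw [hmain (fun a e η eh => Wmi - Wθhat), hmain (fun a e η eh => cihat a eh η),
        hmain (fun a e η eh => ciact a eh η e)]
      simp only [heS]
      have hconst : (∑ a : Z, ∑ eh : Δ, ∑ η : {j : Fin n // j ≠ i} → Δ,
          w a eh η * (Wmi - Wθhat)) = Wmi - Wθhat := by
        have := hw1
        calc (∑ a : Z, ∑ eh : Δ, ∑ η : {j : Fin n // j ≠ i} → Δ, w a eh η * (Wmi - Wθhat))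
            = (∑ a : Z, ∑ eh : Δ, ∑ η : {j : Fin n // j ≠ i} → Δ, w a eh η) * (Wmi - Wθhat) := by
              simp only [Finset.sum_mul]
          _ = Wmi - Wθhat := by rw [hw1, one_mul]
      rw [hconst, ← hEci']
    rw [hML]
    rw [hmix] at hconv
    linarith
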